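/- Every tensor X ∈ ℂ^{n1×n2×n3} with tubal rank r admits a truncated t-SVD: there exist column-orthogonal tensors U ∈ ℂ^{n1×r×n3} and V ∈ ℂ^{n2×r×n3} and an f-diagonal tensor S ∈ ℂ^{r×r×n3} such that X = U * S * V^H. -/

import Mathlib

open Complex Matrix BigOperators Kronecker

noncomputable section

/-- DFT along the third mode, applied slice-wise. -/
def dft {n1 n2 n3 : ℕ} (X : Fin n3 → Matrix (Fin n1) (Fin n2) ℂ) :
    Fin n3 → Matrix (Fin n1) (Fin n2) ℂ :=
  fun k => ∑ j : Fin n3,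
    Complex.exp (-2 * (Real.pi : ℂ) * Complex.I * ((k : ℕ) : ℂ) * ((j : ℕ) : ℂ) / (n3 : ℂ)) • X j

/-- Block circulant matrix of a third-order tensor. -/
def bcirc {n1 n2 n3 : ℕ} (X : Fin n3 → Matrix (Fin n1) (Fin n2) ℂ) :
    Matrix (Fin n3 × Fin n1) (Fin n3 × Fin n2) ℂ :=
  Matrix.of fun p q => X (p.1 - q.1) p.2 q.2

/-- Vertical stacking of the frontal slices. -/
def bvec {n2 n4 n3 : ℕ} (Y : Fin n3 → Matrix (Fin n2) (Fin n4) ℂ) :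
    Matrix (Fin n3 × Fin n2) (Fin n4) ℂ :=
  Matrix.of fun p c => Y p.1 p.2 c

/-- t-product of third-order tensors, defined via bvfold(bcirc(X)·bvec(Y)). -/
def tMul {n1 n2 n4 n3 : ℕ} (X : Fin n3 → Matrix (Fin n1) (Fin n2) ℂ)
    (Y : Fin n3 → Matrix (Fin n2) (Fin n4) ℂ) :
    Fin n3 → Matrix (Fin n1) (Fin n4) ℂ :=
  fun k => Matrix.of fun a c => (bcirc X * bvec Y) (k, a) c

/-- Tensor conjugate transpose: conjugate-transpose each frontal slice and
reverse the order of slices 2 through n3. -/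
def tH {n1 n2 n3 : ℕ} (X : Fin n3 → Matrix (Fin n1) (Fin n2) ℂ) :
    Fin n3 → Matrix (Fin n2) (Fin n1) ℂ :=
  fun k => (X (-k))ᴴ

/-- Identity tensor: first frontal slice the identity matrix, others zero. -/
def tId (n1 n3 : ℕ) : Fin n3 → Matrix (Fin n1) (Fin n1) ℂ :=
  fun k => if (k : ℕ) = 0 then 1 else 0

/-- Frobenius norm of a third-order tensor. -/
def fro {n1 n2 n3 : ℕ} (X : Fin n3 → Matrix (Fin n1) (Fin n2) ℂ) : ℝ :=
  Real.sqrt (∑ k, ∑ i, ∑ j, ‖X k i j‖ ^ 2)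

/-- Squared Frobenius norm of a matrix. -/
def mFrobSq {m n : ℕ} (A : Matrix (Fin m) (Fin n) ℂ) : ℝ :=
  ∑ i, ∑ j, ‖A i j‖ ^ 2

/-- Tubal rank: maximal rank of the Fourier-domain frontal slices. -/
def tubalRank {n1 n2 n3 : ℕ} (X : Fin n3 → Matrix (Fin n1) (Fin n2) ℂ) : ℕ :=
  Finset.univ.sup fun k => (dft X k).rank

/-- Mode-1 matricization. -/
def mode1 {n1 n2 n3 : ℕ} (X : Fin n3 → Matrix (Fin n1) (Fin n2) ℂ) :
    Matrix (Fin n1) (Fin n2 × Fin n3) ℂ :=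
  Matrix.of fun i p => X p.2 i p.1

/-- Mode-2 matricization. -/
def mode2 {n1 n2 n3 : ℕ} (X : Fin n3 → Matrix (Fin n1) (Fin n2) ℂ) :
    Matrix (Fin n2) (Fin n1 × Fin n3) ℂ :=
  Matrix.of fun j p => X p.2 p.1 j

/-- The n×n discrete Fourier matrix. -/
def dftMatrix (n : ℕ) : Matrix (Fin n) (Fin n) ℂ :=
  Matrix.of fun j k =>
    Complex.exp (-2 * (Real.pi : ℂ) * Complex.I * ((j : ℕ) : ℂ) * ((k : ℕ) : ℂ) / (n : ℂ))

/-!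
The DFT along the third mode turns the t-product into slice-wise matrix multiplication, the
tensor conjugate transpose into slice-wise conjugate transposition and the identity tensor into
identity slices, and it is invertible. So it suffices to choose, for every Fourier slice (whose
rank is at most the tubal rank `r`), a matrix SVD with `r` columns and to transform back;
f-diagonality survives the inverse DFT because it is preserved by linear combinations.

The matrix SVD comes from the spectral decomposition `Aᴴ A = W diag(μ) Wᴴ`: the columns of `A W`
are orthogonal with squared norms `μ`, so those with `μ ≠ 0`, normalised, give `rank A`
orthonormal left singular vectors, and both families of singular vectors are then completed to
`r` orthonormal columns.
-/

namespace Matrix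

variable {α 𝕜 : Type*} [RCLike 𝕜] {l m n ι κ : Type*}

theorem submatrix_mul_submatrix_of_col_eq_zero [Fintype m] [Fintype ι]
    [NonUnitalNonAssocSemiring α] (M : Matrix l m α) (N : Matrix m n α) (f : ι ↪ m) (hM : ∀ j ∉ Set.range f, ∀ i, M i j = 0) :
    M.submatrix id f * N.submatrix f id = M * N := by
  ext i k
  exact Fintype.sum_of_injective f f.injective _ _ (fun j hj => by simp [hM j hj]) fun _ => rfl

theorem mul_diagonal_extend_mul [Fintype ι] [Fintype κ] [DecidableEq ι] [DecidableEq κ]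
    [NonUnitalNonAssocSemiring α] (U : Matrix l κ α) (d : ι → α) (N : Matrix κ n α)
    (e : ι ↪ κ) :
    U * diagonal (Function.extend e d 0) * N =
      U.submatrix id e * diagonal d * N.submatrix e id := by
  rw [← submatrix_mul_submatrix_of_col_eq_zero _ N e]
  · congr 1
    ext i t
    simp [e.injective.extend_apply]
  · intro j hj i
    simp [Function.extend_apply' _ _ _ (by simpa using hj)]

theorem orthonormal_toLp_col_iff [Fintype m] [DecidableEq ι] {U : Matrix m ι 𝕜} :
    Orthonormal 𝕜 (fun j => WithLp.toLp 2 (U.col j)) ↔ Uᴴ * U = 1 := by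
  rw [← gram_eq_one_iff_orthonormal]
  congr!
  ext i j
  simp [gram_apply, mul_apply, EuclideanSpace.inner_eq_star_dotProduct, dotProduct, mul_comm]

theorem exists_conjTranspose_mul_self_eq_one_extension [Fintype m] [Fintype κ] [DecidableEq ι]
    [DecidableEq κ] {U₀ : Matrix m ι 𝕜} (hU₀ : U₀ᴴ * U₀ = 1) (e : ι ↪ κ)
    (hκ : Fintype.card κ ≤ Fintype.card m) :
    ∃ U : Matrix m κ 𝕜, Uᴴ * U = 1 ∧ U.submatrix id e = U₀ := by
  obtain ⟨g⟩ := Function.Embedding.nonempty_of_card_le hκ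
  set f := e.trans g
  set u : ι → EuclideanSpace 𝕜 m := fun t => WithLp.toLp 2 (U₀.col t)
  set v := Function.extend f u 0
  have hvf (t : ι) : v (f t) = u t := f.injective.extend_apply _ _ _
  have hv : Orthonormal 𝕜 ((Set.range f).domRestrict v) := by
    convert (orthonormal_toLp_col_iff.mpr hU₀).comp _
      (Equiv.ofInjective _ f.injective).symm.injective
    ext ⟨_, t, rfl⟩ : 1
    simp [hvf, u]
  obtain ⟨b, hb⟩ := hv.exists_orthonormalBasis_extension_of_card_eq (by simp)
  refine ⟨of fun i c => b (g c) i, ?_, ?_⟩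
  · rw [← orthonormal_toLp_col_iff]
    exact b.orthonormal.comp g g.injective
  · ext i t
    simp [show b (g (e t)) = u t from (hb _ ⟨t, rfl⟩).trans (hvf t), u]

open scoped ComplexOrder in
theorem col_eq_zero_of_conjTranspose_mul_self_apply_eq_zero [Fintype m] {C : Matrix m n 𝕜}
    {j : n} (h : (Cᴴ * C) j j = 0) : C.col j = 0 :=
  dotProduct_star_self_eq_zero.mp h

open scoped ComplexOrder in
theorem exists_compact_svd [Fintype m] [Fintype n] [DecidableEq n] (A : Matrix m n 𝕜) :
    ∃ (U₀ : Matrix m (Fin A.rank) 𝕜) (σ : Fin A.rank → 𝕜) (V₀ : Matrix n (Fin A.rank) 𝕜),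
      U₀ᴴ * U₀ = 1 ∧ V₀ᴴ * V₀ = 1 ∧ A = U₀ * diagonal σ * V₀ᴴ := by
  have hB := isHermitian_conjTranspose_mul_self A
  have hμ := (posSemidef_conjTranspose_mul_self A).eigenvalues_nonneg
  set μ := hB.eigenvalues
  set W : Matrix n n 𝕜 := (hB.eigenvectorUnitary : Matrix n n 𝕜)
  have hW : Wᴴ * W = 1 := Unitary.coe_star_mul_self _
  have hW' : W * Wᴴ = 1 := Unitary.coe_mul_star_self _
  set C := A * W
  have hC : Cᴴ * C = diagonal (RCLike.ofReal ∘ μ) := by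
    rw [← hB.conjStarAlgAut_star_eigenvectorUnitary, Unitary.conjStarAlgAut_star_apply]
    simp [C, conjTranspose_mul, Matrix.mul_assoc, W, star_eq_conjTranspose]
  have hcard : Fintype.card {j // μ j ≠ 0} = A.rank := by
    rw [← hB.rank_eq_card_non_zero_eigs, rank_conjTranspose_mul_self]
  set e := Fintype.equivFinOfCardEq hcard
  set f : Fin A.rank ↪ n := e.symm.toEmbedding.trans (Function.Embedding.subtype _)
  have hrange (j : n) : j ∈ Set.range f ↔ μ j ≠ 0 :=
    ⟨fun ⟨i, hi⟩ => hi ▸ (e.symm i).2, fun hj => ⟨e ⟨j, hj⟩, by simp [f]⟩⟩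
  have hf (j : n) (hj : j ∉ Set.range f) (i : m) : C i j = 0 := by
    have hCj : (Cᴴ * C) j j = 0 := by simpa [hC] using not_not.mp (mt (hrange j).mpr hj)
    exact congr_fun (col_eq_zero_of_conjTranspose_mul_self_apply_eq_zero hCj) i
  set σ : Fin A.rank → 𝕜 := fun i => (√(μ (f i)) : 𝕜)
  have hσ (i : Fin A.rank) : σ i ≠ 0 := RCLike.ofReal_ne_zero.mpr <|
    Real.sqrt_ne_zero'.mpr <| (hμ _).lt_of_ne' <| (hrange _).mp ⟨i, rfl⟩
  have hσμ (i : Fin A.rank) : star (σ i) * σ i = μ (f i) := by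
    rw [RCLike.star_def, RCLike.conj_ofReal, ← RCLike.ofReal_mul, Real.mul_self_sqrt (hμ _)]
  refine ⟨C.submatrix id f * diagonal σ⁻¹, σ, W.submatrix id f, ?_, ?_, ?_⟩
  · rw [conjTranspose_mul, conjTranspose_submatrix, Matrix.mul_assoc,
      ← Matrix.mul_assoc _ (C.submatrix id f), ← submatrix_mul _ _ _ _ _ Function.bijective_id,
      hC, submatrix_diagonal_embedding, diagonal_conjTranspose, diagonal_mul_diagonal,
      diagonal_mul_diagonal, ← diagonal_one]
    congr 1
    ext i
    simp [← hσμ, hσ]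
  · rw [conjTranspose_submatrix, ← submatrix_mul _ _ _ _ _ Function.bijective_id, hW,
      submatrix_one_embedding]
  · rw [Matrix.mul_assoc (C.submatrix id f), diagonal_mul_diagonal,
      show (fun i => σ⁻¹ i * σ i) = 1 from funext fun i => inv_mul_cancel₀ (hσ i), diagonal_one',
      Matrix.mul_one, conjTranspose_submatrix, submatrix_mul_submatrix_of_col_eq_zero _ _ _ hf,
      Matrix.mul_assoc, hW', Matrix.mul_one]

theorem exists_svd_of_rank_le [Fintype m] [Fintype n] [Fintype κ] [DecidableEq n]
    [DecidableEq κ] (A : Matrix m n 𝕜) (hA : A.rank ≤ Fintype.card κ)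
    (hm : Fintype.card κ ≤ Fintype.card m) (hn : Fintype.card κ ≤ Fintype.card n) :
    ∃ (U : Matrix m κ 𝕜) (S : Matrix κ κ 𝕜) (V : Matrix n κ 𝕜),
      Uᴴ * U = 1 ∧ Vᴴ * V = 1 ∧ S.IsDiag ∧ A = U * S * Vᴴ := by
  obtain ⟨U₀, σ, V₀, hU₀, hV₀, hA₀⟩ := A.exists_compact_svd
  obtain ⟨e⟩ : Nonempty (Fin A.rank ↪ κ) :=
    Function.Embedding.nonempty_of_card_le (by simpa using hA)
  obtain ⟨U, hU, rfl⟩ := exists_conjTranspose_mul_self_eq_one_extension hU₀ e hm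
  obtain ⟨V, hV, rfl⟩ := exists_conjTranspose_mul_self_eq_one_extension hV₀ e hn
  refine ⟨U, diagonal (Function.extend e σ 0), V, hU, hV, isDiag_diagonal _, ?_⟩
  rw [mul_diagonal_extend_mul, ← conjTranspose_submatrix, ← hA₀]

end Matrix

theorem ZMod.finEquiv_apply {n : ℕ} [NeZero n] (j : Fin n) : ZMod.finEquiv n j = (j : ℕ) := by
  obtain _ | n := n
  · exact absurd rfl (NeZero.ne 0)
  · exact (ZMod.natCast_zmod_val (n := n + 1) j).symm

namespace Fin

def stdAddChar (n : ℕ) [NeZero n] : AddChar (Fin n) ℂ where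
  toFun j := ZMod.stdAddChar (ZMod.finEquiv n j)
  map_zero_eq_one' := by simp
  map_add_eq_mul' a b := by simp [AddChar.map_add_eq_mul]

theorem stdAddChar_apply {n : ℕ} [NeZero n] (j : Fin n) :
    stdAddChar n j = ZMod.stdAddChar (ZMod.finEquiv n j) := rfl

theorem star_stdAddChar {n : ℕ} [NeZero n] (j : Fin n) :
    star (stdAddChar n j) = stdAddChar n (-j) := by
  rw [AddChar.map_neg_eq_inv, stdAddChar_apply, ZMod.stdAddChar_apply, ← Circle.coe_inv,
    Circle.coe_inv_eq_conj, Complex.star_def]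

end Fin

section DFT

variable {n1 n2 n3 : ℕ}

theorem dft_apply_eq_sum [NeZero n3] (X : Fin n3 → Matrix (Fin n1) (Fin n2) ℂ) (k : Fin n3) :
    dft X k = ∑ j, Fin.stdAddChar n3 (-(j * k)) • X j := by
  refine Finset.sum_congr rfl fun j _ => ?_
  rw [Fin.stdAddChar_apply, map_neg, map_mul, ZMod.finEquiv_apply, ZMod.finEquiv_apply,
    ← Nat.cast_mul, AddChar.map_neg_eq_inv, ZMod.stdAddChar_apply, ZMod.toCircle_natCast,
    ← Complex.exp_neg]
  congr 2
  push_cast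
  ring

open scoped ZMod in
theorem dft_apply_eq_zmod_dft [NeZero n3] (X : Fin n3 → Matrix (Fin n1) (Fin n2) ℂ)
    (k : Fin n3) : dft X k = 𝓕 (X ∘ (ZMod.finEquiv n3).symm) (ZMod.finEquiv n3 k) := by
  rw [dft_apply_eq_sum, ZMod.dft_apply, ← (ZMod.finEquiv n3).toEquiv.sum_comp]
  refine Finset.sum_congr rfl fun j _ => ?_
  simp [Fin.stdAddChar_apply]

theorem dft_bijective : Function.Bijective (dft : (Fin n3 → Matrix (Fin n1) (Fin n2) ℂ) → _) := by
  obtain _ | N := n3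
  · exact ⟨fun _ _ _ => Subsingleton.elim _ _, fun Z => ⟨Z, Subsingleton.elim _ _⟩⟩
  set e := (ZMod.finEquiv (N + 1)).toEquiv
  suffices dft = ⇑((LinearEquiv.funCongrLeft ℂ _ e).symm ≪≫ₗ ZMod.dft ≪≫ₗ
      LinearEquiv.funCongrLeft ℂ (Matrix (Fin n1) (Fin n2) ℂ) e) from this ▸ LinearEquiv.bijective _
  ext X k : 2
  exact dft_apply_eq_zmod_dft X k

theorem dft_injective : Function.Injective (dft : (Fin n3 → Matrix (Fin n1) (Fin n2) ℂ) → _) :=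
  dft_bijective.injective

theorem dft_map (L : Matrix (Fin n1) (Fin n2) ℂ →ₗ[ℂ] Matrix (Fin n1) (Fin n2) ℂ)
    (X : Fin n3 → Matrix (Fin n1) (Fin n2) ℂ) (k : Fin n3) :
    dft (fun j => L (X j)) k = L (dft X k) := by
  simp [dft, map_sum, map_smul]

theorem isDiag_of_isDiag_dft {r : ℕ} {S : Fin n3 → Matrix (Fin r) (Fin r) ℂ}
    (hS : ∀ k, (dft S k).IsDiag) (k : Fin n3) : (S k).IsDiag := by
  set P := diagonalLinearMap (Fin r) ℂ ℂ ∘ₗ diagLinearMap (Fin r) ℂ ℂ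
  have : (fun j => P (S j)) = S := dft_injective <| funext fun j => by
    rw [dft_map]
    exact (hS j).diagonal_diag
  exact (isDiag_iff_diagonal_diag _).mpr (congr_fun this k)

theorem tMul_apply {n4 : ℕ} (X : Fin n3 → Matrix (Fin n1) (Fin n2) ℂ)
    (Y : Fin n3 → Matrix (Fin n2) (Fin n4) ℂ) (k : Fin n3) :
    tMul X Y k = ∑ l, X (k - l) * Y l := by
  ext a c
  simp [tMul, bcirc, bvec, mul_apply, Fintype.sum_prod_type, Matrix.sum_apply]

theorem dft_tMul {n4 : ℕ} (X : Fin n3 → Matrix (Fin n1) (Fin n2) ℂ)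
    (Y : Fin n3 → Matrix (Fin n2) (Fin n4) ℂ) (k : Fin n3) :
    dft (tMul X Y) k = dft X k * dft Y k := by
  have : NeZero n3 := ⟨k.pos.ne'⟩
  simp only [dft_apply_eq_sum, tMul_apply, Finset.smul_sum, Matrix.sum_mul, Matrix.mul_sum,
    Matrix.smul_mul, Matrix.mul_smul, smul_smul]
  rw [Finset.sum_comm]
  refine Fintype.sum_congr _ _ fun l => ?_
  refine Fintype.sum_equiv (Equiv.subRight l) _ _ fun j => ?_
  rw [Equiv.subRight_apply, ← AddChar.map_add_eq_mul, ← neg_add, ← add_mul, add_sub_cancel]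

theorem dft_tH (X : Fin n3 → Matrix (Fin n1) (Fin n2) ℂ) (k : Fin n3) :
    dft (tH X) k = (dft X k)ᴴ := by
  have : NeZero n3 := ⟨k.pos.ne'⟩
  simp only [dft_apply_eq_sum, tH, conjTranspose_sum, conjTranspose_smul, Fin.star_stdAddChar]
  exact Fintype.sum_equiv (Equiv.neg _) _ _ fun j => by simp [neg_mul]

theorem dft_tId {r : ℕ} (k : Fin n3) : dft (tId r n3) k = 1 := by
  have : NeZero n3 := ⟨k.pos.ne'⟩
  simp [dft_apply_eq_sum, tId, Fin.val_eq_zero_iff]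

theorem rank_dft_le_tubalRank (X : Fin n3 → Matrix (Fin n1) (Fin n2) ℂ) (k : Fin n3) :
    (dft X k).rank ≤ tubalRank X :=
  Finset.le_sup (f := fun k => (dft X k).rank) (Finset.mem_univ k)

theorem tubalRank_le_left (X : Fin n3 → Matrix (Fin n1) (Fin n2) ℂ) : tubalRank X ≤ n1 :=
  Finset.sup_le fun k _ => (dft X k).rank_le_card_height.trans (by simp)

theorem tubalRank_le_right (X : Fin n3 → Matrix (Fin n1) (Fin n2) ℂ) : tubalRank X ≤ n2 :=
  Finset.sup_le fun k _ => (dft X k).rank_le_card_width.trans (by simp)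

end DFT

theorem truncated_tSVD_exists {n1 n2 n3 : ℕ} (X : Fin n3 → Matrix (Fin n1) (Fin n2) ℂ) :
    ∃ (U : Fin n3 → Matrix (Fin n1) (Fin (tubalRank X)) ℂ)
      (S : Fin n3 → Matrix (Fin (tubalRank X)) (Fin (tubalRank X)) ℂ)
      (V : Fin n3 → Matrix (Fin n2) (Fin (tubalRank X)) ℂ),
      tMul (tH U) U = tId (tubalRank X) n3 ∧
      tMul (tH V) V = tId (tubalRank X) n3 ∧
      (∀ k, (S k).IsDiag) ∧
      X = tMul U (tMul S (tH V)) := by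
  choose Uh Sh Vh hUh hVh hSh hXh using fun k =>
    (dft X k).exists_svd_of_rank_le (κ := Fin (tubalRank X))
      (by simpa using rank_dft_le_tubalRank X k) (by simpa using tubalRank_le_left X)
      (by simpa using tubalRank_le_right X)
  obtain ⟨U, rfl⟩ := dft_bijective.surjective Uh
  obtain ⟨S, rfl⟩ := dft_bijective.surjective Sh
  obtain ⟨V, rfl⟩ := dft_bijective.surjective Vh
  refine ⟨U, S, V, dft_injective ?_, dft_injective ?_, isDiag_of_isDiag_dft hSh,
    dft_injective ?_⟩ <;> ext1 k
  · rw [dft_tMul, dft_tH, dft_tId, hUh]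
  · rw [dft_tMul, dft_tH, dft_tId, hVh]
  · rw [dft_tMul, dft_tMul, dft_tH, hXh, Matrix.mul_assoc]
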